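/- arXiv:1703.10705 — 2 statements merged into one kernel-verified Lean document; each statement's English description precedes it below -/
import Mathlib

section
/- A set S ⊆ ℤ² is integrally convex if and only if it can be represented as S = {(x₁,x₂) ∈ ℤ² : p_i x₁ + q_i x₂ ≤ r_i (i = 1,…,m)} for some coefficients p_i, q_i ∈ {−1, 0, +1} and integers r_i. -/
open scoped BigOperators

noncomputable section

/-- Integer neighborhood `N(x)` of a real point. -/
def intNbhd {n : ℕ} (x : Fin n → ℝ) : Set (Fin n → ℤ) :=
  {z | ∀ i, |x i - (z i : ℝ)| < 1}

/-- Local convex extension of `f : ℤⁿ → ℝ ∪ {+∞}`. -/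
noncomputable def localExt {n : ℕ} (f : (Fin n → ℤ) → EReal) (x : Fin n → ℝ) : EReal :=
  sInf { v : EReal | ∃ (m : ℕ) (lam : Fin m → ℝ) (y : Fin m → (Fin n → ℤ)),
      (∀ j, 0 ≤ lam j) ∧ (∑ j, lam j) = 1 ∧ (∀ j, y j ∈ intNbhd x) ∧
      (∀ i, (∑ j, lam j * ((y j i : ℝ))) = x i) ∧
      v = ∑ j, (((lam j : ℝ) : EReal) * f (y j)) }

/-- A function is integrally convex if its local convex extension is convex. -/
def IsIntegrallyConvexFn {n : ℕ} (f : (Fin n → ℤ) → EReal) : Prop :=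
  ∀ x y : Fin n → ℝ, ∀ t : ℝ, 0 ≤ t → t ≤ 1 →
    localExt f (fun i => t * x i + (1 - t) * y i) ≤
      ((t : ℝ) : EReal) * localExt f x + (((1 - t : ℝ)) : EReal) * localExt f y

/-- Coercion of an integer point to a real point. -/
def realify {n : ℕ} (z : Fin n → ℤ) : Fin n → ℝ := fun i => (z i : ℝ)

/-- A set `S ⊆ ℤⁿ` is integrally convex. -/
def IsIntegrallyConvexSet {n : ℕ} (S : Set (Fin n → ℤ)) : Prop :=
  ∀ x : Fin n → ℝ, x ∈ convexHull ℝ (realify '' S) →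
    x ∈ convexHull ℝ (realify '' (S ∩ intNbhd x))


/-!
Both conditions are equivalent to: every lattice point outside `S` is strictly separated from `S`
by a line `p x₀ + q x₁ = r` with `p, q ∈ {-1, 0, 1}`. Such separations become a finite system by
taking, for each of the nine directions `(p, q)`, the tight inequality (or a trivial one).

If `S` is integrally convex and `z` passes all nine directional tests, descend from a point
`y ∈ S` towards `z`. Some point of `S` beats `y` in the direction `sign (z - y)`; integral
convexity at a point of the segment towards it, very close to `y`, yields such a point in the
unit box around `y`. That point is closer to `z` in the ℓ¹ + ℓ^∞ distance unless it and `y` are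
opposite corners of a unit square having `z` as a third corner, a configuration that integral
convexity at midpoints settles.

Conversely, for `x ∈ conv S`, a corner `v ∈ N(x)` of the unit cell of `x` missing from `S` is cut
off by the line with normal `sign (v - x)`, and two adjacent missing corners would add up, after
integer rounding, to an axis-parallel cut excluding `x`. Hence `x` lies in a triangle or segment
spanned by corners of its cell that belong to `S`.
-/

def signVectors (n : ℕ) : Finset (Fin n → ℤ) :=
  Fintype.piFinset fun _ => Finset.Icc (-1) 1

lemma mem_signVectors {n : ℕ} {ℓ : Fin n → ℤ} :
    ℓ ∈ signVectors n ↔ ∀ i, -1 ≤ ℓ i ∧ ℓ i ≤ 1 := by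
  simp [signVectors]

lemma zero_mem_signVectors (n : ℕ) : 0 ∈ signVectors n :=
  mem_signVectors.mpr fun _ => by norm_num

def IsCutOutBy {n : ℕ} (D : Finset (Fin n → ℤ)) (S : Set (Fin n → ℤ)) : Prop :=
  ∀ v ∉ S, ∃ ℓ ∈ D, ∀ ζ ∈ S, ℓ ⬝ᵥ ζ < ℓ ⬝ᵥ v

section Halfspaces

variable {n : ℕ}

lemma exists_tight_halfspace (S : Set (Fin n → ℤ)) (ℓ : Fin n → ℤ) :
    ∃ (c : Fin n → ℤ) (r : ℤ), (c = ℓ ∨ c = 0) ∧ (∀ ζ ∈ S, c ⬝ᵥ ζ ≤ r) ∧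
      ∀ z, c ⬝ᵥ z ≤ r → ∃ w ∈ S, ℓ ⬝ᵥ z ≤ ℓ ⬝ᵥ w := by
  rcases S.eq_empty_or_nonempty with rfl | hne
  · exact ⟨0, -1, Or.inr rfl, by simp, fun z hz => by simp at hz⟩
  by_cases hbdd : BddAbove ((ℓ ⬝ᵥ ·) '' S)
  · obtain ⟨w, hw, hmax⟩ := Int.csSup_mem (hne.image _) hbdd
    exact ⟨ℓ, _, Or.inl rfl, fun ζ hζ => le_csSup hbdd ⟨ζ, hζ, rfl⟩,
      fun z hz => ⟨w, hw, hz.trans hmax.ge⟩⟩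
  · refine ⟨0, 0, Or.inr rfl, by simp, fun z _ => ?_⟩
    obtain ⟨_, ⟨w, hw, rfl⟩, hlt⟩ := not_bddAbove_iff.mp hbdd (ℓ ⬝ᵥ z)
    exact ⟨w, hw, hlt.le⟩

theorem isCutOutBy_iff_exists_system {D : Finset (Fin n → ℤ)} (hD : 0 ∈ D)
    (S : Set (Fin n → ℤ)) :
    IsCutOutBy D S ↔ ∃ (m : ℕ) (c : Fin m → Fin n → ℤ) (r : Fin m → ℤ),
      (∀ k, c k ∈ D) ∧ S = {z | ∀ k, c k ⬝ᵥ z ≤ r k} := by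
  constructor
  · intro hS
    choose c r hc hSc hcS using fun ℓ : D => exists_tight_halfspace S ℓ
    have hcD : ∀ ℓ, c ℓ ∈ D := fun ℓ => (hc ℓ).elim (fun h => h ▸ ℓ.2) (fun h => h ▸ hD)
    let e := D.equivFin
    refine ⟨D.card, fun k => c (e.symm k), fun k => r (e.symm k), fun k => hcD _, ?_⟩
    refine Set.Subset.antisymm (fun ζ hζ k => hSc _ ζ hζ) fun z hz => ?_
    by_contra hzS
    obtain ⟨ℓ, hℓ, hsep⟩ := hS z hzS
    obtain ⟨w, hw, hle⟩ := hcS ⟨ℓ, hℓ⟩ z (by simpa using hz (e ⟨ℓ, hℓ⟩))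
    exact (hsep w hw).not_ge hle
  · rintro ⟨m, c, r, hc, rfl⟩ v hv
    obtain ⟨k, hk⟩ : ∃ k, r k < c k ⬝ᵥ v := by simpa using hv
    exact ⟨c k, hc k, fun ζ hζ => (hζ k).trans_lt hk⟩

end Halfspaces

section Lattice

variable {n : ℕ} {S : Set (Fin n → ℤ)} {x : Fin n → ℝ}

@[simp] lemma realify_apply (z : Fin n → ℤ) (i : Fin n) : realify z i = z i := rfl

lemma realify_dotProduct_realify (ℓ z : Fin n → ℤ) :
    realify ℓ ⬝ᵥ realify z = ((ℓ ⬝ᵥ z : ℤ) : ℝ) := by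
  simp [dotProduct]

lemma two_mul_midpoint_realify (u v : Fin n → ℤ) (i : Fin n) :
    2 * midpoint ℝ (realify u) (realify v) i = u i + v i := by
  simp [midpoint_eq_smul_add]

lemma midpoint_realify_mem_convexHull {u v : Fin n → ℤ} (hu : u ∈ S) (hv : v ∈ S) :
    midpoint ℝ (realify u) (realify v) ∈ convexHull ℝ (realify '' S) :=
  segment_subset_convexHull (Set.mem_image_of_mem _ hu) (Set.mem_image_of_mem _ hv)
    (midpoint_mem_segment _ _)

lemma dotProduct_le_of_mem_convexHull {ℓ : Fin n → ℤ} {c : ℤ} (h : ∀ ζ ∈ S, ℓ ⬝ᵥ ζ ≤ c)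
    (hx : x ∈ convexHull ℝ (realify '' S)) : realify ℓ ⬝ᵥ x ≤ c := by
  refine convexHull_min ?_ (convex_halfSpace_le ?_ (c : ℝ)) hx
  · rintro _ ⟨ζ, hζ, rfl⟩
    simpa [realify_dotProduct_realify] using h ζ hζ
  · exact ⟨dotProduct_add _, fun t u => dotProduct_smul t _ u⟩

lemma eq_or_eq_of_abs_sub_lt_one {u v g : ℤ} {t : ℝ} (ht : 2 * t = u + v) (huv : |u - v| ≤ 1)
    (h : |t - g| < 1) : g = u ∨ g = v := by
  have h2 : |((u + v - 2 * g : ℤ) : ℝ)| < 2 := by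
    push_cast
    rw [← ht, show 2 * t - 2 * (g : ℝ) = 2 * (t - g) by ring, abs_mul, abs_two]
    linarith
  have h2' : |u + v - 2 * g| < 2 := by exact_mod_cast h2
  rw [abs_lt] at h2'
  rw [abs_le] at huv
  omega

lemma eq_of_mem_intNbhd_realify {g z : Fin n → ℤ} (h : g ∈ intNbhd (realify z)) : g = z := by
  funext i
  have := eq_or_eq_of_abs_sub_lt_one (u := z i) (v := z i) (by simp; ring) (by simp) (h i)
  tauto

lemma sign_sub_dotProduct_lt_dotProduct {y z : Fin n → ℤ} (h : y ≠ z) :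
    (fun i => Int.sign (z i - y i)) ⬝ᵥ y < (fun i => Int.sign (z i - y i)) ⬝ᵥ z := by
  obtain ⟨i, hi⟩ := Function.ne_iff.mp h
  rw [← sub_pos, ← dotProduct_sub]
  simp only [dotProduct, Pi.sub_apply, Int.sign_mul_self_eq_natAbs]
  exact Finset.sum_pos' (fun j _ => by positivity) ⟨i, Finset.mem_univ _, by omega⟩

end Lattice

namespace IsIntegrallyConvexSet

variable {n : ℕ} {S : Set (Fin n → ℤ)} {x : Fin n → ℝ}

lemma mem_of_realify_mem_convexHull (hS : IsIntegrallyConvexSet S) {z : Fin n → ℤ}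
    (hz : realify z ∈ convexHull ℝ (realify '' S)) : z ∈ S := by
  have hne : (convexHull ℝ (realify '' (S ∩ intNbhd (realify z)))).Nonempty := ⟨_, hS _ hz⟩
  obtain ⟨_, g, ⟨hgS, hgN⟩, rfl⟩ := convexHull_nonempty_iff.mp hne
  rwa [← eq_of_mem_intNbhd_realify hgN]

lemma mem_of_intNbhd_subset_pair (hS : IsIntegrallyConvexSet S)
    (hx : x ∈ convexHull ℝ (realify '' S)) {u v : Fin n → ℤ} (hN : intNbhd x ⊆ {u, v})
    (hxu : x ≠ realify u) : v ∈ S := by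
  by_contra hv
  have hsub : S ∩ intNbhd x ⊆ {u} := fun g ⟨hgS, hgN⟩ => by
    rcases hN hgN with rfl | rfl
    · rfl
    · exact absurd hgS hv
  have := convexHull_mono (Set.image_mono hsub) (hS x hx)
  simp only [Set.image_singleton, convexHull_singleton, Set.mem_singleton_iff] at this
  exact hxu this

lemma mem_of_midpoint_mem_convexHull (hS : IsIntegrallyConvexSet S) {u v : Fin n → ℤ}
    (k : Fin n) (hk : ∀ i ≠ k, u i = v i) (huv : |u k - v k| = 1)
    (hmid : midpoint ℝ (realify u) (realify v) ∈ convexHull ℝ (realify '' S)) : v ∈ S := by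
  have hN : ∀ g ∈ intNbhd (midpoint ℝ (realify u) (realify v)), ∀ i, g i = u i ∨ g i = v i :=
    fun g hg i => by
      refine eq_or_eq_of_abs_sub_lt_one (two_mul_midpoint_realify u v i) ?_ (hg i)
      by_cases hi : i = k
      · rw [hi, huv]
      · simp [hk i hi]
  refine hS.mem_of_intNbhd_subset_pair hmid (u := u) (fun g hg => ?_) fun h => ?_
  · have hoff : ∀ i ≠ k, g i = u i := fun i hi =>
      (hN g hg i).elim id fun h => h.trans (hk i hi).symm
    rcases hN g hg k with h | h
    · exact Or.inl (funext fun i => if hi : i = k then hi ▸ h else hoff i hi)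
    · exact Or.inr (funext fun i => if hi : i = k then hi ▸ h else (hoff i hi).trans (hk i hi))
  · have := two_mul_midpoint_realify u v k
    rw [h, realify_apply] at this
    have : u k = v k := by exact_mod_cast (by linarith : (u k : ℝ) = v k)
    simp [this] at huv

lemma exists_mem_intNbhd_lt (hS : IsIntegrallyConvexSet S)
    (hx : x ∈ convexHull ℝ (realify '' S)) {ℓ : Fin n → ℤ} {c : ℤ}
    (hc : (c : ℝ) < realify ℓ ⬝ᵥ x) : ∃ g ∈ S ∩ intNbhd x, c < ℓ ⬝ᵥ g := by
  by_contra! h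
  exact (dotProduct_le_of_mem_convexHull h (hS x hx)).not_gt hc

lemma exists_neighbor_lt (hS : IsIntegrallyConvexSet S) {y w : Fin n → ℤ} (hy : y ∈ S)
    (hw : w ∈ S) {ℓ : Fin n → ℤ} (hyw : ℓ ⬝ᵥ y < ℓ ⬝ᵥ w) :
    ∃ g ∈ S, (∀ i, |g i - y i| ≤ 1) ∧ ℓ ⬝ᵥ y < ℓ ⬝ᵥ g := by
  -- integral convexity at the point `y + ε • (w - y)`, so close to `y` that its integer
  -- neighbourhood lies in the unit box around `y`
  set d := realify w - realify y
  set ε : ℝ := 1 / (‖d‖ + 1)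
  have hε : 0 < ε := by positivity
  have hεd : ∀ i, |ε * d i| ≤ 1 := fun i => by
    have hdi : |d i| ≤ ‖d‖ := norm_le_pi_norm d i
    rw [abs_mul, abs_of_pos hε, div_mul_eq_mul_div, one_mul, div_le_one (by positivity)]
    linarith
  have hx : realify y + ε • d ∈ convexHull ℝ (realify '' S) :=
    (convex_convexHull ℝ _).add_smul_sub_mem (subset_convexHull ℝ _ (Set.mem_image_of_mem _ hy))
      (subset_convexHull ℝ _ (Set.mem_image_of_mem _ hw))
      ⟨hε.le, div_le_one_of_le₀ (by linarith [norm_nonneg d]) (by positivity)⟩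
  have hlt : ((ℓ ⬝ᵥ y : ℤ) : ℝ) < realify ℓ ⬝ᵥ (realify y + ε • d) := by
    have : ((ℓ ⬝ᵥ y : ℤ) : ℝ) < ℓ ⬝ᵥ w := by exact_mod_cast hyw
    simp only [d, dotProduct_add, dotProduct_smul, dotProduct_sub, realify_dotProduct_realify,
      smul_eq_mul]
    nlinarith
  obtain ⟨g, ⟨hgS, hgN⟩, hg⟩ := hS.exists_mem_intNbhd_lt hx hlt
  refine ⟨g, hgS, fun i => ?_, hg⟩
  have h2 : |((g i - y i : ℤ) : ℝ)| < 2 := by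
    have := abs_sub_lt_iff.mp (hgN i)
    have := abs_le.mp (hεd i)
    simp only [Pi.add_apply, Pi.smul_apply, smul_eq_mul, realify_apply] at *
    rw [abs_lt]
    push_cast
    constructor <;> linarith
  have : |g i - y i| < 2 := by exact_mod_cast h2
  rw [abs_lt] at this
  rw [abs_le]
  omega

end IsIntegrallyConvexSet

section Plane

open Matrix

variable {S : Set (Fin 2 → ℤ)}

lemma IsIntegrallyConvexSet.mem_of_square_diagonal_mem (hS : IsIntegrallyConvexSet S)
    {z : Fin 2 → ℤ} (hz : ∀ ℓ ∈ signVectors 2, ∃ w ∈ S, ℓ ⬝ᵥ z ≤ ℓ ⬝ᵥ w) {A B : Fin 2 → ℤ}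
    (hA : A ∈ S) (hB : B ∈ S) (hAB : ∀ i, |B i - A i| = 1) (hz0 : z 0 = B 0)
    (hz1 : z 1 = A 1) : z ∈ S := by
  obtain ⟨τ, hτ, hB0⟩ : ∃ τ : ℤ, (τ = 1 ∨ τ = -1) ∧ B 0 = A 0 + τ :=
    ⟨B 0 - A 0, (abs_eq zero_le_one).mp (hAB 0), by ring⟩
  obtain ⟨σ, hσ, hB1⟩ : ∃ σ : ℤ, (σ = 1 ∨ σ = -1) ∧ B 1 = A 1 + σ :=
    ⟨B 1 - A 1, (abs_eq zero_le_one).mp (hAB 1), by ring⟩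
  obtain ⟨w, hw, hzw⟩ := hz ![τ, -σ] (mem_signVectors.mpr fun i => by
    fin_cases i <;> simp <;> omega)
  rw [vec2_dotProduct, vec2_dotProduct] at hzw
  obtain ⟨g, hg, hgA, hAg⟩ := hS.exists_neighbor_lt hA hw (ℓ := ![τ, -σ]) (by
    rw [vec2_dotProduct, vec2_dotProduct]
    simp only [cons_val_zero, cons_val_one] at hzw ⊢
    rcases hτ with rfl | rfl <;> rcases hσ with rfl | rfl <;> omega)
  rw [vec2_dotProduct, vec2_dotProduct] at hAg
  simp only [cons_val_zero, cons_val_one] at hAg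
  have hg0 := abs_le.mp (hgA 0)
  have hg1 := abs_le.mp (hgA 1)
  -- `g = z`, or `z` is the midpoint of `g` and `B`, or `g, B` have the same midpoint as `A, z`
  have key : g 0 = z 0 ∧ g 1 = z 1 ∨ g 0 = z 0 ∧ g 1 = A 1 - σ ∨ g 0 = A 0 ∧ g 1 = A 1 - σ := by
    rcases hτ with rfl | rfl <;> rcases hσ with rfl | rfl <;> omega
  rcases key with ⟨h0, h1⟩ | ⟨h0, h1⟩ | ⟨h0, h1⟩
  · rwa [funext (Fin.forall_fin_two.mpr ⟨h0, h1⟩ : ∀ i, g i = z i)] at hg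
  · refine hS.mem_of_realify_mem_convexHull ?_
    convert midpoint_realify_mem_convexHull hg hB using 1
    funext i
    have := two_mul_midpoint_realify g B i
    fin_cases i <;> simp at this ⊢ <;> push_cast [h0, h1, hz0, hz1, hB0, hB1] at this ⊢ <;>
      linarith
  · refine hS.mem_of_midpoint_mem_convexHull (u := A) 0 (fun i hi => ?_) ?_ ?_
    · fin_cases i
      exacts [absurd rfl hi, hz1.symm]
    · rw [hz0, hB0]
      rcases hτ with rfl | rfl <;> norm_num
    · convert midpoint_realify_mem_convexHull hg hB using 1
      funext i
      refine mul_left_cancel₀ two_ne_zero ?_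
      rw [two_mul_midpoint_realify, two_mul_midpoint_realify]
      fin_cases i <;> simp [h0, h1, hz0, hz1, hB0, hB1]

def l1AddLinftyDist (z y : Fin 2 → ℤ) : ℕ :=
  (z 0 - y 0).natAbs + (z 1 - y 1).natAbs + max (z 0 - y 0).natAbs (z 1 - y 1).natAbs

lemma eq_or_l1AddLinftyDist_lt_or_square {y z g : Fin 2 → ℤ} (hyz : y ≠ z)
    (hgy : ∀ i, |g i - y i| ≤ 1)
    (hg : (fun i => Int.sign (z i - y i)) ⬝ᵥ y < (fun i => Int.sign (z i - y i)) ⬝ᵥ g) :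
    g = z ∨ l1AddLinftyDist z g < l1AddLinftyDist z y ∨
      (∀ i, |g i - y i| = 1) ∧ (z 0 = g 0 ∧ z 1 = y 1 ∨ z 0 = y 0 ∧ z 1 = g 1) := by
  have hyz' : y 0 ≠ z 0 ∨ y 1 ≠ z 1 := by
    by_contra! h
    exact hyz (funext (Fin.forall_fin_two.mpr h))
  have hσ : ∀ i, Int.sign (z i - y i) = 1 ∧ y i < z i ∨ Int.sign (z i - y i) = 0 ∧ z i = y i ∨
      Int.sign (z i - y i) = -1 ∧ z i < y i := fun i => by
    rcases Int.sign_trichotomy (z i - y i) with h | h | h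
    · exact Or.inl ⟨h, by linarith [Int.sign_eq_one_iff_pos.mp h]⟩
    · exact Or.inr (Or.inl ⟨h, by linarith [Int.sign_eq_zero_iff_zero.mp h]⟩)
    · exact Or.inr (Or.inr ⟨h, by linarith [Int.sign_eq_neg_one_iff_neg.mp h]⟩)
  rw [vec2_dotProduct, vec2_dotProduct] at hg
  have hg0 := abs_le.mp (hgy 0)
  have hg1 := abs_le.mp (hgy 1)
  simp only [funext_iff, Fin.forall_fin_two, abs_eq zero_le_one, l1AddLinftyDist]
  rcases hσ 0 with ⟨h0, h0'⟩ | ⟨h0, h0'⟩ | ⟨h0, h0'⟩ <;>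
    rcases hσ 1 with ⟨h1, h1'⟩ | ⟨h1, h1'⟩ | ⟨h1, h1'⟩ <;>
    simp only [h0, h1] at hg <;> omega

lemma IsIntegrallyConvexSet.exists_closer (hS : IsIntegrallyConvexSet S) {z : Fin 2 → ℤ}
    (hz : ∀ ℓ ∈ signVectors 2, ∃ w ∈ S, ℓ ⬝ᵥ z ≤ ℓ ⬝ᵥ w) (hzS : z ∉ S) {y : Fin 2 → ℤ}
    (hy : y ∈ S) : ∃ y' ∈ S, l1AddLinftyDist z y' < l1AddLinftyDist z y := by
  have hyz : y ≠ z := fun h => hzS (h ▸ hy)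
  set σ : Fin 2 → ℤ := fun i => Int.sign (z i - y i)
  obtain ⟨w, hw, hzw⟩ := hz σ (mem_signVectors.mpr fun i => by
    rcases Int.sign_trichotomy (z i - y i) with h | h | h <;> simp [σ, h])
  obtain ⟨g, hg, hgy, hyg⟩ :=
    hS.exists_neighbor_lt hy hw ((sign_sub_dotProduct_lt_dotProduct hyz).trans_le hzw)
  rcases eq_or_l1AddLinftyDist_lt_or_square hyz hgy hyg with
    rfl | hlt | ⟨hgy1, ⟨hz0, hz1⟩ | ⟨hz0, hz1⟩⟩
  · exact absurd hg hzS
  · exact ⟨g, hg, hlt⟩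
  · exact absurd (hS.mem_of_square_diagonal_mem hz hy hg hgy1 hz0 hz1) hzS
  · refine absurd (hS.mem_of_square_diagonal_mem hz hg hy (fun i => ?_) hz0 hz1) hzS
    rw [abs_sub_comm]
    exact hgy1 i

theorem IsIntegrallyConvexSet.isCutOutBy_signVectors (hS : IsIntegrallyConvexSet S) :
    IsCutOutBy (signVectors 2) S := by
  intro z hzS
  by_contra! hz
  obtain ⟨y₀, hy₀, -⟩ := hz 0 (zero_mem_signVectors 2)
  obtain ⟨y, hy, hmin⟩ := (measure (l1AddLinftyDist z)).wf.has_min S ⟨y₀, hy₀⟩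
  obtain ⟨y', hy', hlt⟩ := hS.exists_closer hz hzS hy
  exact hmin y' hy' hlt

end Plane

section Cell

open Matrix

variable {S : Set (Fin 2 → ℤ)} {x : Fin 2 → ℝ}

lemma mul_add_mul_le_of_mem_convexHull {p q c : ℤ} (h : ∀ ζ ∈ S, p * ζ 0 + q * ζ 1 ≤ c)
    (hx : x ∈ convexHull ℝ (realify '' S)) : p * x 0 + q * x 1 ≤ c := by
  have := dotProduct_le_of_mem_convexHull (ℓ := ![p, q])
    (fun ζ hζ => by rw [vec2_dotProduct]; exact h ζ hζ) hx
  rwa [vec2_dotProduct] at this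

lemma mem_convexHull_of_cell_weights (a b : ℤ) {w₀₀ w₁₀ w₀₁ w₁₁ : ℝ} (h₀₀ : 0 ≤ w₀₀)
    (h₁₀ : 0 ≤ w₁₀) (h₀₁ : 0 ≤ w₀₁) (h₁₁ : 0 ≤ w₁₁) (hsum : w₀₀ + w₁₀ + w₀₁ + w₁₁ = 1)
    (hx0 : x 0 = a + w₁₀ + w₁₁) (hx1 : x 1 = b + w₀₁ + w₁₁)
    (m₀₀ : 0 < w₀₀ → ![a, b] ∈ S) (m₁₀ : 0 < w₁₀ → ![a + 1, b] ∈ S)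
    (m₀₁ : 0 < w₀₁ → ![a, b + 1] ∈ S) (m₁₁ : 0 < w₁₁ → ![a + 1, b + 1] ∈ S) :
    x ∈ convexHull ℝ (realify '' (S ∩ intNbhd x)) := by
  let v : Fin 4 → Fin 2 → ℤ := ![![a, b], ![a + 1, b], ![a, b + 1], ![a + 1, b + 1]]
  let w : Fin 4 → ℝ := ![w₀₀, w₁₀, w₀₁, w₁₁]
  have hw : ∀ j, 0 ≤ w j := by intro j; fin_cases j <;> assumption
  have hv : ∀ j, 0 < w j → v j ∈ S ∩ intNbhd x := by
    intro j hj
    fin_cases j <;>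
      simp only [intNbhd, Fin.forall_fin_two, Set.mem_inter_iff, Set.mem_ofPred_eq, abs_lt] <;>
      simp [v, w] at hj ⊢
    all_goals exact ⟨by tauto, ⟨by linarith, by linarith⟩, by linarith, by linarith⟩
  have hx : x = Finset.univ.centerMass w (realify ∘ v) := by
    funext i
    fin_cases i <;> simp [Finset.centerMass, Fin.sum_univ_four, w, v, hsum, hx0, hx1]
    · linear_combination -(a : ℝ) * hsum
    · linear_combination -(b : ℝ) * hsum
  have hmem : (Finset.univ.filter (w · ≠ 0)).centerMass w (realify ∘ v) ∈
      convexHull ℝ (realify '' (S ∩ intNbhd x)) := by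
    refine Finset.centerMass_mem_convexHull _ (fun j _ => hw j) ?_ fun j hj => ?_
    · rw [Finset.sum_filter_ne_zero]
      simp [w, Fin.sum_univ_four, hsum]
    · exact Set.mem_image_of_mem _ (hv j ((hw j).lt_of_ne (Finset.mem_filter.mp hj).2.symm))
  rwa [Finset.centerMass_filter_ne_zero, ← hx] at hmem

namespace IsCutOutBy

lemma cut_of_mem_intNbhd (hS : IsCutOutBy (signVectors 2) S)
    (hx : x ∈ convexHull ℝ (realify '' S)) {v : Fin 2 → ℤ} (hvx : v ∈ intNbhd x) (hv : v ∉ S) :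
    (∀ i, x i ≠ v i) ∧ ∀ ζ ∈ S, ∑ i, (if x i < v i then 1 else -1) * (ζ i - v i) < 0 := by
  obtain ⟨ℓ, hℓ, hcut⟩ := hS v hv
  have hℓ' : ∀ i, ℓ i = -1 ∨ ℓ i = 0 ∨ ℓ i = 1 := fun i => by
    have := mem_signVectors.mp hℓ i; omega
  have hxv := dotProduct_le_of_mem_convexHull (c := ℓ ⬝ᵥ v - 1)
    (fun ζ hζ => by linarith [hcut ζ hζ]) hx
  rw [vec2_dotProduct, vec2_dotProduct] at hxv
  push_cast at hxv
  simp only [realify_apply] at hxv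
  -- `ℓ ⬝ᵥ (v - x) ≥ 1`, while each of its two terms is `< 1`: so both terms are positive
  have hlt : ∀ i, (ℓ i : ℝ) * (v i - x i) < 1 := fun i => by
    have := abs_sub_lt_iff.mp (hvx i)
    rcases hℓ' i with h | h | h <;> simp [h] <;> linarith
  have hpos : ∀ i, 0 < (ℓ i : ℝ) * (v i - x i) := by
    intro i; fin_cases i <;> simp <;> linarith [hlt 0, hlt 1]
  have hsign : ∀ i, ℓ i = if x i < v i then 1 else -1 := fun i => by
    have := hpos i
    split_ifs with h <;> rcases hℓ' i with h' | h' | h' <;> simp [h'] at this ⊢ <;> linarith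
  refine ⟨fun i h => by simpa [h] using hpos i, fun ζ hζ => ?_⟩
  have := hcut ζ hζ
  rw [vec2_dotProduct, vec2_dotProduct] at this
  simp only [← hsign, Fin.sum_univ_two]
  linarith

lemma cut_lowerLeft (hS : IsCutOutBy (signVectors 2) S) (hx : x ∈ convexHull ℝ (realify '' S))
    {a b : ℤ} (ha : ⌊x 0⌋ = a) (hb : ⌊x 1⌋ = b) (h : ![a, b] ∉ S) :
    ∀ ζ ∈ S, a + b < ζ 0 + ζ 1 := by
  obtain ⟨ha₁, ha₂⟩ := Int.floor_eq_iff.mp ha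
  obtain ⟨hb₁, hb₂⟩ := Int.floor_eq_iff.mp hb
  obtain ⟨-, hcut⟩ := hS.cut_of_mem_intNbhd hx (Fin.forall_fin_two.mpr
    ⟨by simp [abs_lt]; constructor <;> linarith, by simp [abs_lt]; constructor <;> linarith⟩) h
  intro ζ hζ
  have := hcut ζ hζ
  simp [Fin.sum_univ_two, ha₁.not_gt, hb₁.not_gt] at this
  omega

lemma cut_lowerRight (hS : IsCutOutBy (signVectors 2) S) (hx : x ∈ convexHull ℝ (realify '' S))
    {a b : ℤ} (ha : ⌊x 0⌋ = a) (hb : ⌊x 1⌋ = b) (h : ![a + 1, b] ∉ S) (hs : (a : ℝ) < x 0) :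
    (b : ℝ) < x 1 ∧ ∀ ζ ∈ S, ζ 0 - ζ 1 < a + 1 - b := by
  obtain ⟨-, ha₂⟩ := Int.floor_eq_iff.mp ha
  obtain ⟨hb₁, hb₂⟩ := Int.floor_eq_iff.mp hb
  obtain ⟨hne, hcut⟩ := hS.cut_of_mem_intNbhd hx (Fin.forall_fin_two.mpr
    ⟨by simp [abs_lt]; constructor <;> linarith, by simp [abs_lt]; constructor <;> linarith⟩) h
  refine ⟨hb₁.lt_of_ne (by simpa using (hne 1).symm), fun ζ hζ => ?_⟩
  have := hcut ζ hζ
  simp [Fin.sum_univ_two, ha₂, hb₁.not_gt] at this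
  omega

lemma cut_upperLeft (hS : IsCutOutBy (signVectors 2) S) (hx : x ∈ convexHull ℝ (realify '' S))
    {a b : ℤ} (ha : ⌊x 0⌋ = a) (hb : ⌊x 1⌋ = b) (h : ![a, b + 1] ∉ S) (ht : (b : ℝ) < x 1) :
    (a : ℝ) < x 0 ∧ ∀ ζ ∈ S, ζ 1 - ζ 0 < b + 1 - a := by
  obtain ⟨ha₁, ha₂⟩ := Int.floor_eq_iff.mp ha
  obtain ⟨-, hb₂⟩ := Int.floor_eq_iff.mp hb
  obtain ⟨hne, hcut⟩ := hS.cut_of_mem_intNbhd hx (Fin.forall_fin_two.mpr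
    ⟨by simp [abs_lt]; constructor <;> linarith, by simp [abs_lt]; constructor <;> linarith⟩) h
  refine ⟨ha₁.lt_of_ne (by simpa using (hne 0).symm), fun ζ hζ => ?_⟩
  have := hcut ζ hζ
  simp [Fin.sum_univ_two, hb₂, ha₁.not_gt] at this
  omega

lemma cut_upperRight (hS : IsCutOutBy (signVectors 2) S) (hx : x ∈ convexHull ℝ (realify '' S))
    {a b : ℤ} (ha : ⌊x 0⌋ = a) (hb : ⌊x 1⌋ = b) (h : ![a + 1, b + 1] ∉ S) (hs : (a : ℝ) < x 0)
    (ht : (b : ℝ) < x 1) : ∀ ζ ∈ S, ζ 0 + ζ 1 < a + b + 2 := by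
  obtain ⟨-, ha₂⟩ := Int.floor_eq_iff.mp ha
  obtain ⟨-, hb₂⟩ := Int.floor_eq_iff.mp hb
  obtain ⟨-, hcut⟩ := hS.cut_of_mem_intNbhd hx (Fin.forall_fin_two.mpr
    ⟨by simp [abs_lt]; constructor <;> linarith, by simp [abs_lt]; constructor <;> linarith⟩) h
  intro ζ hζ
  have := hcut ζ hζ
  simp [Fin.sum_univ_two, ha₂, hb₂] at this
  omega

lemma mem_convexHull_of_lowerLeft_upperRight_mem (hS : IsCutOutBy (signVectors 2) S)
    (hx : x ∈ convexHull ℝ (realify '' S)) {a b : ℤ} (ha : ⌊x 0⌋ = a) (hb : ⌊x 1⌋ = b)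
    (h₀₀ : ![a, b] ∈ S) (h₁₁ : ![a + 1, b + 1] ∈ S) :
    x ∈ convexHull ℝ (realify '' (S ∩ intNbhd x)) := by
  obtain ⟨ha₁, ha₂⟩ := Int.floor_eq_iff.mp ha
  obtain ⟨hb₁, hb₂⟩ := Int.floor_eq_iff.mp hb
  rcases le_total (x 1 - b) (x 0 - a) with hts | hst
  · refine mem_convexHull_of_cell_weights a b (w₀₀ := 1 - (x 0 - a))
      (w₁₀ := x 0 - a - (x 1 - b)) (w₀₁ := 0) (w₁₁ := x 1 - b) (by linarith) (by linarith)
      le_rfl (by linarith) (by ring) (by ring) (by ring) (fun _ => h₀₀) (fun hw => ?_)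
      (fun hw => absurd hw (lt_irrefl 0)) (fun _ => h₁₁)
    by_contra h
    have := mul_add_mul_le_of_mem_convexHull (p := 1) (q := -1) (c := a - b) (fun ζ hζ => by
      have := (hS.cut_lowerRight hx ha hb h (by linarith)).2 ζ hζ; omega) hx
    push_cast at this
    linarith
  · refine mem_convexHull_of_cell_weights a b (w₀₀ := 1 - (x 1 - b)) (w₁₀ := 0)
      (w₀₁ := x 1 - b - (x 0 - a)) (w₁₁ := x 0 - a) (by linarith) le_rfl (by linarith)
      (by linarith) (by ring) (by ring) (by ring) (fun _ => h₀₀)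
      (fun hw => absurd hw (lt_irrefl 0)) (fun hw => ?_) (fun _ => h₁₁)
    by_contra h
    have := mul_add_mul_le_of_mem_convexHull (p := -1) (q := 1) (c := b - a) (fun ζ hζ => by
      have := (hS.cut_upperLeft hx ha hb h (by linarith)).2 ζ hζ; omega) hx
    push_cast at this
    linarith

lemma mem_convexHull_of_upperRight_not_mem (hS : IsCutOutBy (signVectors 2) S)
    (hx : x ∈ convexHull ℝ (realify '' S)) {a b : ℤ} (ha : ⌊x 0⌋ = a) (hb : ⌊x 1⌋ = b)
    (h₀₀ : ![a, b] ∈ S) (h₁₁ : ![a + 1, b + 1] ∉ S) :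
    x ∈ convexHull ℝ (realify '' (S ∩ intNbhd x)) := by
  obtain ⟨ha₁, ha₂⟩ := Int.floor_eq_iff.mp ha
  obtain ⟨hb₁, hb₂⟩ := Int.floor_eq_iff.mp hb
  have hst : x 0 - a + (x 1 - b) ≤ 1 := by
    rcases ha₁.lt_or_eq with hs | hs
    · rcases hb₁.lt_or_eq with ht | ht
      · have := mul_add_mul_le_of_mem_convexHull (p := 1) (q := 1) (c := a + b + 1)
          (fun ζ hζ => by have := hS.cut_upperRight hx ha hb h₁₁ hs ht ζ hζ; omega) hx
        push_cast at this
        linarith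
      · linarith
    · linarith
  refine mem_convexHull_of_cell_weights a b (w₀₀ := 1 - (x 0 - a) - (x 1 - b))
    (w₁₀ := x 0 - a) (w₀₁ := x 1 - b) (w₁₁ := 0) (by linarith) (by linarith) (by linarith)
    le_rfl (by ring) (by ring) (by ring) (fun _ => h₀₀) (fun hs => ?_) (fun ht => ?_)
    (fun hw => absurd hw (lt_irrefl 0))
  · by_contra h
    obtain ⟨ht, h₁₀⟩ := hS.cut_lowerRight hx ha hb h (by linarith)
    have := mul_add_mul_le_of_mem_convexHull (p := 1) (q := 0) (c := a) (fun ζ hζ => by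
      have := h₁₀ ζ hζ; have := hS.cut_upperRight hx ha hb h₁₁ (by linarith) ht ζ hζ; omega) hx
    push_cast at this
    linarith
  · by_contra h
    obtain ⟨hs, h₀₁⟩ := hS.cut_upperLeft hx ha hb h (by linarith)
    have := mul_add_mul_le_of_mem_convexHull (p := 0) (q := 1) (c := b) (fun ζ hζ => by
      have := h₀₁ ζ hζ; have := hS.cut_upperRight hx ha hb h₁₁ hs (by linarith) ζ hζ; omega) hx
    push_cast at this
    linarith

lemma mem_convexHull_of_lowerLeft_not_mem (hS : IsCutOutBy (signVectors 2) S)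
    (hx : x ∈ convexHull ℝ (realify '' S)) {a b : ℤ} (ha : ⌊x 0⌋ = a) (hb : ⌊x 1⌋ = b)
    (h₀₀ : ![a, b] ∉ S) : x ∈ convexHull ℝ (realify '' (S ∩ intNbhd x)) := by
  obtain ⟨ha₁, ha₂⟩ := Int.floor_eq_iff.mp ha
  obtain ⟨hb₁, hb₂⟩ := Int.floor_eq_iff.mp hb
  have hcut := hS.cut_lowerLeft hx ha hb h₀₀
  have hst : 1 ≤ x 0 - a + (x 1 - b) := by
    have := mul_add_mul_le_of_mem_convexHull (p := -1) (q := -1) (c := -(a + b) - 1)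
      (fun ζ hζ => by have := hcut ζ hζ; omega) hx
    push_cast at this
    linarith
  refine mem_convexHull_of_cell_weights a b (w₀₀ := 0) (w₁₀ := 1 - (x 1 - b))
    (w₀₁ := 1 - (x 0 - a)) (w₁₁ := x 0 - a + (x 1 - b) - 1) le_rfl (by linarith)
    (by linarith) (by linarith) (by ring) (by ring) (by ring)
    (fun hw => absurd hw (lt_irrefl 0)) (fun _ => ?_) (fun _ => ?_) (fun hw => ?_)
  · by_contra h
    have := mul_add_mul_le_of_mem_convexHull (p := 0) (q := -1) (c := -(b + 1)) (fun ζ hζ => by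
      have := (hS.cut_lowerRight hx ha hb h (by linarith)).2 ζ hζ; have := hcut ζ hζ; omega) hx
    push_cast at this
    linarith
  · by_contra h
    have := mul_add_mul_le_of_mem_convexHull (p := -1) (q := 0) (c := -(a + 1)) (fun ζ hζ => by
      have := (hS.cut_upperLeft hx ha hb h (by linarith)).2 ζ hζ; have := hcut ζ hζ; omega) hx
    push_cast at this
    linarith
  · by_contra h
    have := mul_add_mul_le_of_mem_convexHull (p := 1) (q := 1) (c := a + b + 1) (fun ζ hζ => by
      have := hS.cut_upperRight hx ha hb h (by linarith) (by linarith) ζ hζ; omega) hx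
    push_cast at this
    linarith

theorem isIntegrallyConvexSet (hS : IsCutOutBy (signVectors 2) S) : IsIntegrallyConvexSet S := by
  intro x hx
  by_cases h₀₀ : ![⌊x 0⌋, ⌊x 1⌋] ∈ S
  · by_cases h₁₁ : ![⌊x 0⌋ + 1, ⌊x 1⌋ + 1] ∈ S
    · exact hS.mem_convexHull_of_lowerLeft_upperRight_mem hx rfl rfl h₀₀ h₁₁
    · exact hS.mem_convexHull_of_upperRight_not_mem hx rfl rfl h₀₀ h₁₁
  · exact hS.mem_convexHull_of_lowerLeft_not_mem hx rfl rfl h₀₀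

end IsCutOutBy

end Cell

theorem isIntegrallyConvexSet_iff_isCutOutBy_signVectors {S : Set (Fin 2 → ℤ)} :
    IsIntegrallyConvexSet S ↔ IsCutOutBy (signVectors 2) S :=
  ⟨IsIntegrallyConvexSet.isCutOutBy_signVectors, IsCutOutBy.isIntegrallyConvexSet⟩

/-- Characterization of integrally convex sets in ℤ² by inequalities with
coefficients in {-1,0,+1}. -/
theorem integrally_convex_set_dim2_characterization (S : Set (Fin 2 → ℤ)) :
    IsIntegrallyConvexSet S ↔
      ∃ (m : ℕ) (p q r : Fin m → ℤ),
        (∀ i, p i = -1 ∨ p i = 0 ∨ p i = 1) ∧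
        (∀ i, q i = -1 ∨ q i = 0 ∨ q i = 1) ∧
        S = {x : Fin 2 → ℤ | ∀ i, p i * x 0 + q i * x 1 ≤ r i} := by
  rw [isIntegrallyConvexSet_iff_isCutOutBy_signVectors,
    isCutOutBy_iff_exists_system (zero_mem_signVectors 2)]
  constructor
  · rintro ⟨m, c, r, hc, rfl⟩
    have hc' := fun k => mem_signVectors.mp (hc k)
    refine ⟨m, (c · 0), (c · 1), r, fun k => ?_, fun k => ?_,
      by simp [Matrix.vec2_dotProduct]⟩
    · have := hc' k 0; dsimp only; omega
    · have := hc' k 1; dsimp only; omega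
  · rintro ⟨m, p, q, r, hp, hq, rfl⟩
    refine ⟨m, fun k => ![p k, q k], r, fun k => mem_signVectors.mpr fun i => ?_,
      Set.ext fun z => by simp only [Set.mem_ofPred_eq, Matrix.vec2_dotProduct]; rfl⟩
    fin_cases i
    · have := hp k; simp; omega
    · have := hq k; simp; omega
end
end

section
/- (Box-barrier property) Let f : ℤⁿ → ℝ ∪ {+∞} be integrally convex, p ∈ (ℤ ∪ {−∞})ⁿ, q ∈ (ℤ ∪ {+∞})ⁿ with p ≤ q. Define S = {x ∈ ℤⁿ : p_i < x_i < q_i ∀i} and let W be the set of integer points x with p ≤ x ≤ q such that x_i = p_i or x_i = q_i for some i. If x̂ ∈ S ∩ dom f satisfies f(x̂) ≤ f(y) for all y ∈ W, then f(x̂) ≤ f(z) for all z ∈ ℤⁿ \ S. -/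
open scoped BigOperators

noncomputable section

/-! Follow the segment from `x̂` to `z`. Since `x̂` lies in the open box and `z` does not,
the segment leaves the open box at a point `x = x̂ + t (z - x̂)`, `0 < t ≤ 1`, of the closed
box with some coordinate on a face. The bounds are integers, so every point of `N(x)` lies
in the closed box and on that same face, i.e. in `W`; hence `f̃ x ≥ f x̂`. Convexity of `f̃`
along the segment gives `f̃ x ≤ t f z + (1 - t) f x̂`, and `t > 0` yields `f x̂ ≤ f z`. -/

open Set Filter Topology

theorem exists_mem_diff_of_continuousOn {X : Type*} [TopologicalSpace X] {γ : ℝ → X}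
    (hγ : ContinuousOn γ (Icc 0 1)) {C U : Set X} (hC : IsClosed C) (hU : IsOpen U)
    (hUC : U ⊆ C) (h0 : γ 0 ∈ U) (h1 : γ 1 ∉ U) : ∃ t ∈ Ioc (0 : ℝ) 1, γ t ∈ C \ U := by
  by_contra! h
  have hsub : Icc (0 : ℝ) 1 ⊆ γ ⁻¹' C := by
    refine IsClosed.Icc_subset_of_forall_mem_nhdsWithin ?_ (hUC h0) ?_
    · rw [inter_comm]; exact hγ.preimage_isClosed_of_isClosed isClosed_Icc hC
    · rintro x ⟨hxC, hx0, hx1⟩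
      have hxU : γ x ∈ U := by
        rcases hx0.eq_or_lt with rfl | hx0
        · exact h0
        · by_contra hxU; exact h x ⟨hx0, hx1.le⟩ ⟨hxC, hxU⟩
      have hUx : γ ⁻¹' U ∈ 𝓝[Icc 0 1] x := hγ x ⟨hx0, hx1.le⟩ (hU.mem_nhds hxU)
      have hIcc : Icc (0 : ℝ) 1 ∈ 𝓝[>] x :=
        mem_of_superset (Ioc_mem_nhdsGT hx1)
          (Ioc_subset_Icc_self.trans (Icc_subset_Icc_left hx0))
      exact mem_of_superset (nhdsWithin_le_of_mem hIcc hUx) (preimage_mono hUC)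
  exact h 1 ⟨one_pos, le_rfl⟩ ⟨hsub ⟨zero_le_one, le_rfl⟩, h1⟩

theorem isClosed_setOf_forall_coe_mem_Icc {ι : Type*} (lo hi : ι → EReal) :
    IsClosed {x : ι → ℝ | ∀ i, (x i : EReal) ∈ Icc (lo i) (hi i)} := by
  simp only [ofPred_forall]
  exact isClosed_iInter fun i =>
    isClosed_Icc.preimage (continuous_coe_real_ereal.comp (continuous_apply i))

theorem isOpen_setOf_forall_coe_mem_Ioo {ι : Type*} [Finite ι] (lo hi : ι → EReal) :
    IsOpen {x : ι → ℝ | ∀ i, (x i : EReal) ∈ Ioo (lo i) (hi i)} := by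
  simp only [ofPred_forall]
  exact isOpen_iInter_of_finite fun i =>
    isOpen_Ioo.preimage (continuous_coe_real_ereal.comp (continuous_apply i))

theorem Int.le_of_cast_le_of_abs_sub_lt_one {a k : ℤ} {x : ℝ} (h : (a : ℝ) ≤ x)
    (hk : |x - k| < 1) : a ≤ k := by
  have : (a : ℝ) < k + 1 := by linarith [(abs_lt.mp hk).2]
  exact Int.lt_add_one_iff.mp (by exact_mod_cast this)

theorem Int.le_of_le_cast_of_abs_sub_lt_one {b k : ℤ} {x : ℝ} (h : x ≤ b)
    (hk : |x - k| < 1) : k ≤ b := by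
  have : (k : ℝ) < b + 1 := by linarith [(abs_lt.mp hk).1]
  exact Int.lt_add_one_iff.mp (by exact_mod_cast this)

theorem Int.eq_of_abs_sub_lt_one {a k : ℤ} (h : |((a : ℝ) - k)| < 1) : k = a := by
  have : |a - k| < 1 := by exact_mod_cast h
  rw [abs_lt] at this
  omega

namespace WithBot

/-- Bounds are compared with real coordinates in `EReal`, so that infinite ones need no
case split. -/
def toEReal (a : WithBot ℤ) : EReal := a.recBotCoe ⊥ fun k => ((k : ℝ) : EReal)

@[simp] theorem toEReal_bot : (⊥ : WithBot ℤ).toEReal = ⊥ := rfl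

@[simp] theorem toEReal_coe (k : ℤ) : (k : WithBot ℤ).toEReal = ((k : ℝ) : EReal) := rfl

theorem toEReal_lt_coe_iff {a : WithBot ℤ} {k : ℤ} :
    a.toEReal < ((k : ℝ) : EReal) ↔ a < k := by
  induction a using WithBot.recBotCoe <;> simp [EReal.coe_lt_coe_iff]

theorem le_of_toEReal_le {a : WithBot ℤ} {x : ℝ} {k : ℤ} (h : a.toEReal ≤ x)
    (hk : |x - k| < 1) : a ≤ k := by
  induction a using WithBot.recBotCoe with
  | bot => exact bot_le
  | coe a =>
    exact WithBot.coe_le_coe.mpr (Int.le_of_cast_le_of_abs_sub_lt_one (by simpa using h) hk)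

theorem coe_eq_of_toEReal_eq {a : WithBot ℤ} {x : ℝ} {k : ℤ} (h : a.toEReal = x)
    (hk : |x - k| < 1) : (k : WithBot ℤ) = a := by
  induction a using WithBot.recBotCoe with
  | bot => simp at h
  | coe a =>
    simp only [toEReal_coe, EReal.coe_eq_coe_iff] at h
    subst h
    exact congrArg _ (Int.eq_of_abs_sub_lt_one hk)

end WithBot

namespace WithTop

def toEReal (b : WithTop ℤ) : EReal := b.recTopCoe ⊤ fun k => ((k : ℝ) : EReal)

@[simp] theorem toEReal_top : (⊤ : WithTop ℤ).toEReal = ⊤ := rfl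

@[simp] theorem toEReal_coe (k : ℤ) : (k : WithTop ℤ).toEReal = ((k : ℝ) : EReal) := rfl

theorem coe_lt_toEReal_iff {b : WithTop ℤ} {k : ℤ} :
    ((k : ℝ) : EReal) < b.toEReal ↔ k < b := by
  induction b using WithTop.recTopCoe <;> simp [EReal.coe_lt_coe_iff]

theorem le_of_le_toEReal {b : WithTop ℤ} {x : ℝ} {k : ℤ} (h : (x : EReal) ≤ b.toEReal)
    (hk : |x - k| < 1) : k ≤ b := by
  induction b using WithTop.recTopCoe with
  | top => exact le_top
  | coe b =>
    exact WithTop.coe_le_coe.mpr (Int.le_of_le_cast_of_abs_sub_lt_one (by simpa using h) hk)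

theorem coe_eq_of_eq_toEReal {b : WithTop ℤ} {x : ℝ} {k : ℤ} (h : (x : EReal) = b.toEReal)
    (hk : |x - k| < 1) : (k : WithTop ℤ) = b := by
  induction b using WithTop.recTopCoe with
  | top => simp at h
  | coe b =>
    simp only [toEReal_coe, EReal.coe_eq_coe_iff] at h
    subst h
    exact congrArg _ (Int.eq_of_abs_sub_lt_one hk)

end WithTop

theorem EReal.le_of_le_mul_add_one_sub_mul {r s : EReal} (hr : r ≠ ⊤) {t : ℝ} (ht : 0 < t)
    (h : r ≤ t * s + ((1 - t : ℝ) : EReal) * r) : r ≤ s := by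
  induction r using EReal.rec with
  | bot => exact bot_le
  | top => exact absurd rfl hr
  | coe r =>
    induction s using EReal.rec with
    | bot =>
      rw [EReal.coe_mul_bot_of_pos ht, EReal.bot_add] at h
      exact absurd h (not_le.mpr (EReal.bot_lt_coe r))
    | top => exact le_top
    | coe s =>
      rw [← EReal.coe_mul, ← EReal.coe_mul, ← EReal.coe_add, EReal.coe_le_coe_iff] at h
      exact EReal.coe_le_coe_iff.mpr (by nlinarith)

theorem localExt_realify_le {n : ℕ} (f : (Fin n → ℤ) → EReal) (z : Fin n → ℤ) :
    localExt f (realify z) ≤ f z := by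
  refine sInf_le ⟨1, fun _ => 1, fun _ => z, fun _ => zero_le_one, by simp,
    fun _ i => by simp [realify], fun i => by simp [realify], by simp⟩

theorem le_localExt_of_forall_intNbhd {n : ℕ} {f : (Fin n → ℤ) → EReal} {x : Fin n → ℝ}
    {r : EReal} (hr : r ≠ ⊤) (h : ∀ y ∈ intNbhd x, r ≤ f y) : r ≤ localExt f x := by
  refine le_sInf ?_
  rintro _ ⟨m, lam, y, hlam0, hlam1, hy, -, rfl⟩
  induction r using EReal.rec with
  | bot => exact bot_le
  | top => exact absurd rfl hr
  | coe r =>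
    calc (r : EReal) = ((∑ j, lam j * r : ℝ) : EReal) := by
          rw [← Finset.sum_mul, hlam1, one_mul]
      _ = ∑ j, ((lam j * r : ℝ) : EReal) :=
        map_sum (⟨⟨(↑), EReal.coe_zero⟩, EReal.coe_add⟩ : ℝ →+ EReal) _ _
      _ ≤ ∑ j, (lam j : EReal) * f (y j) := Finset.sum_le_sum fun j _ => by
        rw [EReal.coe_mul]
        exact mul_le_mul_of_nonneg_left (h _ (hy j)) (EReal.coe_nonneg.mpr (hlam0 j))

theorem mem_boundary_of_mem_intNbhd {n : ℕ} {p : Fin n → WithBot ℤ} {q : Fin n → WithTop ℤ}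
    {x : Fin n → ℝ} (hC : ∀ i, (x i : EReal) ∈ Icc (p i).toEReal (q i).toEReal)
    (hU : ¬ ∀ i, (x i : EReal) ∈ Ioo (p i).toEReal (q i).toEReal)
    {y : Fin n → ℤ} (hy : y ∈ intNbhd x) :
    (∀ i, p i ≤ ((y i : ℤ) : WithBot ℤ) ∧ ((y i : ℤ) : WithTop ℤ) ≤ q i) ∧
      (∃ i, ((y i : ℤ) : WithBot ℤ) = p i ∨ ((y i : ℤ) : WithTop ℤ) = q i) := by
  refine ⟨fun i => ⟨WithBot.le_of_toEReal_le (hC i).1 (hy i),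
    WithTop.le_of_le_toEReal (hC i).2 (hy i)⟩, ?_⟩
  obtain ⟨i, hi⟩ := not_forall.mp hU
  rcases (hC i).1.eq_or_lt with hp | hp
  · exact ⟨i, Or.inl (WithBot.coe_eq_of_toEReal_eq hp (hy i))⟩
  · have hq : (x i : EReal) = (q i).toEReal := (hC i).2.eq_of_not_lt (hi ⟨hp, ·⟩)
    exact ⟨i, Or.inr (WithTop.coe_eq_of_eq_toEReal hq (hy i))⟩

theorem box_barrier_property_general {n : ℕ}
    (f : (Fin n → ℤ) → EReal)
    (hf : IsIntegrallyConvexFn f)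
    (p : Fin n → WithBot ℤ) (q : Fin n → WithTop ℤ)
    (S : Set (Fin n → ℤ))
    (hS : S = {x : Fin n → ℤ | ∀ i, p i < ((x i : ℤ) : WithBot ℤ) ∧
                                     ((x i : ℤ) : WithTop ℤ) < q i})
    (W : Set (Fin n → ℤ))
    (hW : W = {x : Fin n → ℤ |
        (∀ i, p i ≤ ((x i : ℤ) : WithBot ℤ) ∧ ((x i : ℤ) : WithTop ℤ) ≤ q i) ∧
        (∃ i, ((x i : ℤ) : WithBot ℤ) = p i ∨ ((x i : ℤ) : WithTop ℤ) = q i)})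
    (xhat : Fin n → ℤ) (hxS : xhat ∈ S) (hxdom : f xhat ≠ ⊤)
    (hbar : ∀ y ∈ W, f xhat ≤ f y) :
    ∀ z : Fin n → ℤ, z ∉ S → f xhat ≤ f z := by
  intro z hzS
  set U := {x : Fin n → ℝ | ∀ i, (x i : EReal) ∈ Ioo (p i).toEReal (q i).toEReal}
  have hU : ∀ y, realify y ∈ U ↔ y ∈ S := fun y => by
    simp [U, hS, realify, WithBot.toEReal_lt_coe_iff, WithTop.coe_lt_toEReal_iff]
  let γ : ℝ → Fin n → ℝ := fun t i => t * realify z i + (1 - t) * realify xhat i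
  have hγ0 : γ 0 = realify xhat := by ext; simp [γ]
  have hγ1 : γ 1 = realify z := by ext; simp [γ]
  obtain ⟨t, ⟨ht0, ht1⟩, hγC, hγU⟩ := exists_mem_diff_of_continuousOn (γ := γ)
    (by fun_prop) (isClosed_setOf_forall_coe_mem_Icc _ _) (isOpen_setOf_forall_coe_mem_Ioo _ _)
    (fun x hx i => Ioo_subset_Icc_self (hx i)) (hγ0 ▸ (hU xhat).2 hxS)
    (hγ1 ▸ mt (hU z).1 hzS)
  have hlow : f xhat ≤ localExt f (γ t) := le_localExt_of_forall_intNbhd hxdom fun y hy =>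
    hbar y (hW ▸ mem_boundary_of_mem_intNbhd hγC hγU hy)
  have hup : localExt f (γ t) ≤ t * f z + ((1 - t : ℝ) : EReal) * f xhat :=
    (hf _ _ t ht0.le ht1).trans (add_le_add
      (mul_le_mul_of_nonneg_left (localExt_realify_le f z) (EReal.coe_nonneg.mpr ht0.le))
      (mul_le_mul_of_nonneg_left (localExt_realify_le f xhat)
        (EReal.coe_nonneg.mpr (sub_nonneg.mpr ht1))))
  exact EReal.le_of_le_mul_add_one_sub_mul hxdom ht0 (hlow.trans hup)

/-- Box-barrier property for integrally convex functions. -/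
theorem box_barrier_property {n : ℕ}
    (f : (Fin n → ℤ) → EReal) (hbot : ∀ x, f x ≠ ⊥)
    (hf : IsIntegrallyConvexFn f)
    (p : Fin n → WithBot ℤ) (q : Fin n → WithTop ℤ)
    (hpq : ∀ i (a b : ℤ), p i = (a : WithBot ℤ) → q i = (b : WithTop ℤ) → a ≤ b)
    (S : Set (Fin n → ℤ))
    (hS : S = {x : Fin n → ℤ | ∀ i, p i < ((x i : ℤ) : WithBot ℤ) ∧
                                     ((x i : ℤ) : WithTop ℤ) < q i})
    (W : Set (Fin n → ℤ))
    (hW : W = {x : Fin n → ℤ |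
        (∀ i, p i ≤ ((x i : ℤ) : WithBot ℤ) ∧ ((x i : ℤ) : WithTop ℤ) ≤ q i) ∧
        (∃ i, ((x i : ℤ) : WithBot ℤ) = p i ∨ ((x i : ℤ) : WithTop ℤ) = q i)})
    (xhat : Fin n → ℤ) (hxS : xhat ∈ S) (hxdom : f xhat ≠ ⊤)
    (hbar : ∀ y ∈ W, f xhat ≤ f y) :
    ∀ z : Fin n → ℤ, z ∉ S → f xhat ≤ f z :=
  box_barrier_property_general f hf p q S hS W hW xhat hxS hxdom hbar
end
end
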